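/- arXiv:1312.1582 — 2 statements merged into one kernel-verified Lean document; each statement's English description precedes it below -/
import Mathlib

section
/- Let P₀, S, ρ, β, ω be positive real numbers with ω ≠ β, and set t₀ = π/ω. If β·t₀ = (2k + 1)·π for some natural number k (i.e. the pulse duration makes β·t₀ an odd multiple of π), then the post-pulse displacement U₂(t) = P₀·ω·(sin(βt) + sin(β(t − t₀))) / (S·ρ·β·(ω² − β²)) vanishes identically: U₂(t) = 0 for every real t. In other words, the reflected waves exactly kill the motion after the pulse. -/
theorem stmt_2 (P₀ S ρ β ω : ℝ) (hP₀ : 0 < P₀) (hS : 0 < S) (hρ : 0 < ρ)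
    (hβ : 0 < β) (hω : 0 < ω) (hne : ω ≠ β)
    (t₀ : ℝ) (ht₀ : t₀ = Real.pi / ω)
    (k : ℕ) (hk : β * t₀ = (2 * (k : ℝ) + 1) * Real.pi)
    (U₂ : ℝ → ℝ)
    (hU₂ : U₂ = fun t => P₀ * ω * (Real.sin (β * t) + Real.sin (β * (t - t₀))) /
      (S * ρ * β * (ω ^ 2 - β ^ 2))) :
    ∀ t : ℝ, U₂ t = 0 := by
  intro t
  subst hU₂
  have h1 : β * (t - t₀) = β * t - (2 * (k : ℝ) + 1) * Real.pi := by
    rw [← hk]; ring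
  have h2 : Real.sin (β * (t - t₀)) = - Real.sin (β * t) := by
    rw [h1, Real.sin_sub]
    have hc : Real.cos ((2 * (k : ℝ) + 1) * Real.pi) = -1 := by
      have : ((2 * (k : ℝ) + 1) * Real.pi) = (2 * (k : ℝ)) * Real.pi + Real.pi := by ring
      rw [this, Real.cos_add_pi]
      have : (2 * (k : ℝ)) * Real.pi = (k : ℤ) * (2 * Real.pi) := by push_cast; ring
      rw [this, Real.cos_int_mul_two_pi]
    have hs : Real.sin ((2 * (k : ℝ) + 1) * Real.pi) = 0 := by
      have : ((2 * (k : ℝ) + 1) * Real.pi) = ((2 * (k : ℤ) + 1) : ℤ) * Real.pi := by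
        push_cast; ring
      rw [this, Real.sin_int_mul_pi]
    rw [hc, hs]; ring
  simp [h2]
end

section
/- Let P₀, S, ρ, β, ω be positive real numbers with ω ≠ β, and set t₀ = π/ω. Let U be the piecewise function equal to P₀·(ω·sin(βt) − β·sin(ωt)) / (S·ρ·β·(ω² − β²)) for 0 ≤ t ≤ t₀ and equal to P₀·ω·(sin(βt) + sin(β(t − t₀))) / (S·ρ·β·(ω² − β²)) for t > t₀. Then for every real p > 0, ∫₀^∞ e^{−pt}·U(t) dt = P₀·ω·(1 + e^{−p·t₀}) / (S·ρ·(p² + ω²)·(p² + β²)). -/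
/-!
By superposition the half-sine pulse is `sin (ω t)` switched on at `0` plus `sin (ω (t - t₀))`
switched on at `t₀` (the two cancel after `t₀` because `ω t₀ = π`), so
`U t = P₀ / (S ρ) * (r t + 𝟙_{t > t₀} r (t - t₀))`, where `r` is the response of
`ü + β² u = sin (ω t)` from rest. The shift theorem for the Laplace transform turns this into
the factor `1 + exp (-p t₀)`, and the transform of `r` follows from
`∫_a^∞ exp (-p t) sin (c (t - a)) dt = exp (-p a) c / (p² + c²)`.
-/

open Real MeasureTheory Set Filter Topology

section LaplaceSin

variable {p : ℝ} (c a : ℝ)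

noncomputable def laplaceSinPrimitive (p c a t : ℝ) : ℝ :=
  -(exp (-p * t) * ((p * sin (c * (t - a)) + c * cos (c * (t - a))) / (p ^ 2 + c ^ 2)))

lemma hasDerivAt_laplaceSinPrimitive (hp : 0 < p) (t : ℝ) :
    HasDerivAt (laplaceSinPrimitive p c a) (exp (-p * t) * sin (c * (t - a))) t := by
  have hinner : HasDerivAt (fun t => c * (t - a)) c t := by
    simpa using ((hasDerivAt_id t).sub_const a).const_mul c
  have hexp : HasDerivAt (fun t => exp (-p * t)) (-p * exp (-p * t)) t := by
    simpa [mul_comm] using ((hasDerivAt_id t).const_mul (-p)).exp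
  refine (hexp.mul (((hinner.sin.const_mul p).add (hinner.cos.const_mul c)).div_const
    (p ^ 2 + c ^ 2))).neg.congr_deriv ?_
  have hD : p ^ 2 + c ^ 2 ≠ 0 := by positivity
  rw [Pi.add_apply]
  field_simp
  ring

lemma tendsto_laplaceSinPrimitive (hp : 0 < p) :
    Tendsto (laplaceSinPrimitive p c a) atTop (𝓝 0) := by
  have hbdd : IsBoundedUnder (· ≤ ·) atTop
      fun t => ‖(p * sin (c * (t - a)) + c * cos (c * (t - a))) / (p ^ 2 + c ^ 2)‖ := by
    refine isBoundedUnder_of ⟨(|p| + |c|) / (p ^ 2 + c ^ 2), fun t => ?_⟩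
    have hD : 0 < p ^ 2 + c ^ 2 := by positivity
    rw [norm_div, Real.norm_eq_abs, Real.norm_eq_abs, abs_of_pos hD]
    gcongr ?_ / _
    refine (abs_add_le _ _).trans ?_
    rw [abs_mul, abs_mul]
    gcongr
    · exact mul_le_of_le_one_right (abs_nonneg _) (abs_sin_le_one _)
    · exact mul_le_of_le_one_right (abs_nonneg _) (abs_cos_le_one _)
  have hexp : Tendsto (fun t => exp (-p * t)) atTop (𝓝 0) :=
    tendsto_exp_atBot.comp (tendsto_id.const_mul_atTop_of_neg (neg_neg_of_pos hp))
  have := (hexp.zero_mul_isBoundedUnder_le hbdd).neg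
  rwa [neg_zero] at this

lemma integrableOn_exp_neg_mul_sin (hp : 0 < p) (b : ℝ) :
    IntegrableOn (fun t => exp (-p * t) * sin (c * (t - a))) (Ioi b) := by
  refine (exp_neg_integrableOn_Ioi b hp).mono' (by fun_prop) (Eventually.of_forall fun t => ?_)
  rw [norm_mul, Real.norm_of_nonneg (exp_pos _).le, neg_mul]
  exact mul_le_of_le_one_right (exp_pos _).le (abs_sin_le_one _)

lemma integral_Ioi_exp_neg_mul_sin (hp : 0 < p) :
    ∫ t in Ioi a, exp (-p * t) * sin (c * (t - a)) = exp (-p * a) * c / (p ^ 2 + c ^ 2) := by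
  rw [integral_Ioi_of_hasDerivAt_of_tendsto' (fun t _ => hasDerivAt_laplaceSinPrimitive c a hp t)
    (integrableOn_exp_neg_mul_sin c a hp a) (tendsto_laplaceSinPrimitive c a hp)]
  simp [laplaceSinPrimitive, mul_div_assoc]

end LaplaceSin

/-- The paper's `U₁` is `P₀ / (S ρ) * sineResponse β ω`. -/
noncomputable def sineResponse (β ω t : ℝ) : ℝ :=
  (ω * sin (β * t) - β * sin (ω * t)) / (β * (ω ^ 2 - β ^ 2))

section SineResponse

variable {p β ω : ℝ} (a : ℝ)

lemma exp_neg_mul_sineResponse (t : ℝ) :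
    exp (-p * t) * sineResponse β ω (t - a) =
      ω / (β * (ω ^ 2 - β ^ 2)) * (exp (-p * t) * sin (β * (t - a))) -
        β / (β * (ω ^ 2 - β ^ 2)) * (exp (-p * t) * sin (ω * (t - a))) := by
  rw [sineResponse]
  ring

lemma integrableOn_exp_neg_mul_sineResponse (hp : 0 < p) (b : ℝ) :
    IntegrableOn (fun t => exp (-p * t) * sineResponse β ω (t - a)) (Ioi b) := by
  simp_rw [exp_neg_mul_sineResponse]
  exact ((integrableOn_exp_neg_mul_sin β a hp b).const_mul _).sub
    ((integrableOn_exp_neg_mul_sin ω a hp b).const_mul _)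

lemma integral_Ioi_exp_neg_mul_sineResponse (hp : 0 < p) (hβ : β ≠ 0)
    (hωβ : ω ^ 2 - β ^ 2 ≠ 0) :
    ∫ t in Ioi a, exp (-p * t) * sineResponse β ω (t - a) =
      exp (-p * a) * ω / ((p ^ 2 + ω ^ 2) * (p ^ 2 + β ^ 2)) := by
  simp_rw [exp_neg_mul_sineResponse]
  rw [integral_sub ((integrableOn_exp_neg_mul_sin β a hp a).const_mul _)
      ((integrableOn_exp_neg_mul_sin ω a hp a).const_mul _),
    integral_const_mul, integral_const_mul, integral_Ioi_exp_neg_mul_sin β a hp,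
    integral_Ioi_exp_neg_mul_sin ω a hp]
  have hDβ : p ^ 2 + β ^ 2 ≠ 0 := by positivity
  have hDω : p ^ 2 + ω ^ 2 ≠ 0 := by positivity
  field_simp
  ring

end SineResponse

theorem stmt_4_general (P₀ S ρ β ω : ℝ)
    (hβ : 0 < β) (hω : 0 < ω) (hne : ω ≠ β)
    (t₀ : ℝ) (ht₀ : t₀ = Real.pi / ω)
    (U : ℝ → ℝ)
    (hU : U = fun t =>
      if t ≤ t₀ then
        P₀ * (ω * Real.sin (β * t) - β * Real.sin (ω * t)) / (S * ρ * β * (ω ^ 2 - β ^ 2))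
      else
        P₀ * ω * (Real.sin (β * t) + Real.sin (β * (t - t₀))) / (S * ρ * β * (ω ^ 2 - β ^ 2)))
    (p : ℝ) (hp : 0 < p) :
    ∫ t in Set.Ioi (0 : ℝ), Real.exp (-p * t) * U t =
      P₀ * ω * (1 + Real.exp (-p * t₀)) / (S * ρ * (p ^ 2 + ω ^ 2) * (p ^ 2 + β ^ 2)) := by
  have ht₀_pos : 0 < t₀ := ht₀ ▸ div_pos pi_pos hω
  have hωt₀ : ω * t₀ = π := by rw [ht₀]; field_simp
  have hωβ : ω ^ 2 - β ^ 2 ≠ 0 := by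
    rw [sub_ne_zero]; exact fun h => hne ((pow_left_inj₀ hω.le hβ.le two_ne_zero).mp h)
  set r : ℝ → ℝ := fun t => exp (-p * t) * sineResponse β ω (t - 0)
  set r₀ : ℝ → ℝ := fun t => exp (-p * t) * sineResponse β ω (t - t₀)
  have hsplit : ∀ t, exp (-p * t) * U t = P₀ / (S * ρ) * (r t + (Ioi t₀).indicator r₀ t) := by
    intro t
    rcases le_or_gt t t₀ with ht | ht
    · simp only [hU, if_pos ht, indicator_of_notMem (show t ∉ Ioi t₀ from not_lt.mpr ht), r,
        sineResponse, sub_zero, add_zero, div_eq_mul_inv, mul_inv]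
      ring
    · have hshift : sin (ω * (t - t₀)) = -sin (ω * t) := by rw [mul_sub, hωt₀, sin_sub_pi]
      simp only [hU, if_neg (not_le.mpr ht), indicator_of_mem (show t ∈ Ioi t₀ from ht), r, r₀,
        sineResponse, sub_zero, hshift, div_eq_mul_inv, mul_inv]
      ring
  have hr₀ : Integrable ((Ioi t₀).indicator r₀) :=
    (integrable_indicator_iff measurableSet_Ioi).mpr
      (integrableOn_exp_neg_mul_sineResponse t₀ hp t₀)
  simp_rw [hsplit]
  rw [integral_const_mul,
    integral_add (integrableOn_exp_neg_mul_sineResponse 0 hp 0) hr₀.integrableOn,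
    setIntegral_indicator measurableSet_Ioi, inter_eq_right.mpr (Ioi_subset_Ioi ht₀_pos.le),
    integral_Ioi_exp_neg_mul_sineResponse 0 hp hβ.ne' hωβ,
    integral_Ioi_exp_neg_mul_sineResponse t₀ hp hβ.ne' hωβ]
  simp only [mul_zero, exp_zero, div_eq_mul_inv, mul_inv]
  ring

theorem stmt_4 (P₀ S ρ β ω : ℝ) (hP₀ : 0 < P₀) (hS : 0 < S) (hρ : 0 < ρ)
    (hβ : 0 < β) (hω : 0 < ω) (hne : ω ≠ β)
    (t₀ : ℝ) (ht₀ : t₀ = Real.pi / ω)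
    (U : ℝ → ℝ)
    (hU : U = fun t =>
      if t ≤ t₀ then
        P₀ * (ω * Real.sin (β * t) - β * Real.sin (ω * t)) / (S * ρ * β * (ω ^ 2 - β ^ 2))
      else
        P₀ * ω * (Real.sin (β * t) + Real.sin (β * (t - t₀))) / (S * ρ * β * (ω ^ 2 - β ^ 2)))
    (p : ℝ) (hp : 0 < p) :
    ∫ t in Set.Ioi (0 : ℝ), Real.exp (-p * t) * U t =
      P₀ * ω * (1 + Real.exp (-p * t₀)) / (S * ρ * (p ^ 2 + ω ^ 2) * (p ^ 2 + β ^ 2)) :=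
  stmt_4_general P₀ S ρ β ω hβ hω hne t₀ ht₀ U hU p hp
end
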